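/- For every integer n ≥ 1, the semidirect product (Z/2^n Z × Z/2^n Z) ⋊ C_3, where a generator of the cyclic group C_3 of order 3 acts by the automorphism sending (a,b) to (b, -(a+b)), is a 3-pyramidal group. -/

import Mathlib

/-- A finite group is 3-pyramidal if it has exactly three involutions,
which are all conjugate to each other. -/
def IsThreePyramidal (G : Type*) [Group G] : Prop :=
  Nat.card {g : G | orderOf g = 2} = 3 ∧
    ∀ i j : G, orderOf i = 2 → orderOf j = 2 → IsConj i j

/-- The automorphism γ of `ZMod (2^m) × ZMod (2^m)` sending `(a, b)` to `(b, -(a+b))`. -/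
def pyrGamma (m : ℕ) : AddAut (ZMod (2 ^ m) × ZMod (2 ^ m)) where
  toFun p := (p.2, -(p.1 + p.2))
  invFun p := (-(p.1 + p.2), p.1)
  left_inv p := by
    obtain ⟨a, b⟩ := p
    simp only [Prod.mk.injEq]
    constructor <;> first | trivial | ring_nf
  right_inv p := by
    obtain ⟨a, b⟩ := p
    simp only [Prod.mk.injEq]
    constructor <;> first | trivial | ring_nf
  map_add' p q := by
    simp only [Prod.fst_add, Prod.snd_add, Prod.mk.injEq, Prod.mk_add_mk]
    constructor <;> first | trivial | ring_nf

/-- γ as a multiplicative automorphism of the corresponding multiplicative group. -/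
def pyrGammaMul (m : ℕ) : MulAut (Multiplicative (ZMod (2 ^ m) × ZMod (2 ^ m))) :=
  AddEquiv.toMultiplicative (pyrGamma m)

/-!
Since `C₃` has odd order, every involution of the semidirect product lies in the normal
subgroup `(ℤ/2ⁿ)²`. With `t = 2ⁿ⁻¹`, the only element of order `2` in `ℤ/2ⁿ`, the involutions
there are `(t, 0)`, `(0, t)` and `(t, t)`, and as `-t = t` the generator `γ` permutes them
cyclically: `(t, 0) ↦ (0, t) ↦ (t, t)`.
-/

namespace SemidirectProduct

variable {N H : Type*} [Group N] [Group H] {φ : H →* MulAut N}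

lemma orderOf_inl (x : N) : orderOf (inl x : N ⋊[φ] H) = orderOf x :=
  orderOf_injective inl inl_injective x

lemma isConj_inl_inl_apply (h : H) (x : N) : IsConj (inl x : N ⋊[φ] H) (inl (φ h x)) :=
  isConj_iff.mpr ⟨inr h, by rw [inl_aut, map_inv]⟩

lemma setOf_orderOf_eq_of_coprime {k : ℕ} (hk : k.Coprime (Nat.card H)) :
    {g : N ⋊[φ] H | orderOf g = k} = inl '' {x : N | orderOf x = k} := by
  ext g
  constructor
  · intro hg
    have hright : g.right = 1 := orderOf_eq_one_iff.mp <| Nat.eq_one_of_dvd_coprimes hk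
      (hg ▸ orderOf_map_dvd (rightHom : N ⋊[φ] H →* H) g) (orderOf_dvd_natCard g.right)
    have hg' : inl g.left = g := by simpa [hright] using inl_left_mul_inr_right g
    exact ⟨g.left, (orderOf_inl (φ := φ) g.left).symm.trans (hg' ▸ hg), hg'⟩
  · rintro ⟨x, hx, rfl⟩
    exact (orderOf_inl x).trans hx

theorem isThreePyramidal_of_coprime (hH : Nat.Coprime 2 (Nat.card H)) {a b c : N}
    (hinv : {x : N | orderOf x = 2} = {a, b, c}) (hab : a ≠ b) (hac : a ≠ c) (hbc : b ≠ c)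
    (hφab : ∃ h, φ h a = b) (hφbc : ∃ h, φ h b = c) : IsThreePyramidal (N ⋊[φ] H) := by
  have hinvG : {g : N ⋊[φ] H | orderOf g = 2} = inl '' {a, b, c} := by
    rw [setOf_orderOf_eq_of_coprime hH, hinv]
  obtain ⟨h₁, rfl⟩ := hφab
  obtain ⟨h₂, rfl⟩ := hφbc
  have hconj : ∀ g ∈ {g : N ⋊[φ] H | orderOf g = 2}, IsConj (inl a) g := by
    have hab' := isConj_inl_inl_apply (φ := φ) h₁ a
    rw [hinvG]
    rintro _ ⟨x, rfl | rfl | rfl, rfl⟩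
    exacts [IsConj.refl _, hab', hab'.trans (isConj_inl_inl_apply h₂ _)]
  refine ⟨?_, fun i j hi hj => (hconj i hi).symm.trans (hconj j hj)⟩
  rw [hinvG, Nat.card_image_of_injective inl_injective, Nat.card_coe_set_eq, Set.ncard_eq_three]
  exact ⟨_, _, _, hab, hac, hbc, rfl⟩

end SemidirectProduct

lemma Multiplicative.setOf_orderOf_eq {A : Type*} [AddMonoid A] (k : ℕ) :
    {x : Multiplicative A | orderOf x = k} = ofAdd '' {a : A | addOrderOf a = k} :=
  (ofAdd.image_eq_preimage_symm {a : A | addOrderOf a = k}).symm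

lemma setOf_addOrderOf_prod_eq_two {A : Type*} [AddGroup A] {t : A} (ht : t ≠ 0)
    (h2 : ∀ a : A, a + a = 0 ↔ a = 0 ∨ a = t) :
    {p : A × A | addOrderOf p = 2} = {(t, 0), (0, t), (t, t)} := by
  ext ⟨a, b⟩
  simp only [Set.mem_ofPred_eq, addOrderOf_eq_prime_iff, two_nsmul, Prod.mk_add_mk,
    Prod.mk_eq_zero, h2, Set.mem_insert_iff, Set.mem_singleton_iff, Prod.mk.injEq]
  aesop

lemma ZMod.add_self_eq_zero_iff_two_pow {m : ℕ} {a : ZMod (2 ^ (m + 1))} :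
    a + a = 0 ↔ a = 0 ∨ a = 2 ^ m := by
  constructor
  · intro ha
    obtain ⟨k, hk⟩ : 2 ^ (m + 1) ∣ a.val + a.val := by
      rw [← ZMod.natCast_eq_zero_iff, Nat.cast_add, ZMod.natCast_zmod_val, ha]
    have hk2 : k < 2 := by
      have := ZMod.val_lt a
      by_contra!
      nlinarith
    interval_cases k
    · left
      exact (ZMod.val_eq_zero a).1 (by omega)
    · right
      rw [← ZMod.natCast_zmod_val a, show a.val = 2 ^ m by have := pow_succ 2 m; omega]
      push_cast; rfl
  · rintro (rfl | rfl)
    · exact add_zero 0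
    · rw [← two_mul, ← pow_succ']
      exact_mod_cast ZMod.natCast_self (2 ^ (m + 1))

lemma ZMod.two_pow_ne_zero (m : ℕ) : (2 : ZMod (2 ^ (m + 1))) ^ m ≠ 0 := by
  intro h
  have : 2 ^ (m + 1) ∣ 2 ^ m := (ZMod.natCast_eq_zero_iff _ _).1 (by exact_mod_cast h)
  exact absurd ((Nat.pow_dvd_pow_iff_le_right one_lt_two).1 this) (by omega)

lemma pyrGammaMul_apply_ofAdd (m : ℕ) (p : ZMod (2 ^ m) × ZMod (2 ^ m)) :
    pyrGammaMul m (Multiplicative.ofAdd p) = Multiplicative.ofAdd (p.2, -(p.1 + p.2)) := rfl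

lemma pyrGammaMul_pow_three (m : ℕ) : pyrGammaMul m ^ 3 = 1 := by
  refine DFunLike.ext _ _ fun x => ?_
  obtain ⟨p, rfl⟩ := Multiplicative.ofAdd.surjective x
  simp only [pow_succ, pow_zero, one_mul, MulAut.mul_apply, pyrGammaMul_apply_ofAdd,
    MulAut.one_apply]
  congr 1
  ext <;> dsimp only <;> ring

lemma coprime_two_card_zpowers_pyrGammaMul (m : ℕ) :
    Nat.Coprime 2 (Nat.card (Subgroup.zpowers (pyrGammaMul m))) := by
  rw [Nat.card_zpowers]
  exact Nat.Coprime.coprime_dvd_right (orderOf_dvd_of_pow_eq_one (pyrGammaMul_pow_three m))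
    (by norm_num)

theorem stmt_18 (n : ℕ) (hn : 1 ≤ n) :
    IsThreePyramidal
      (Multiplicative (ZMod (2 ^ n) × ZMod (2 ^ n))
        ⋊[(Subgroup.zpowers (pyrGammaMul n)).subtype] ↥(Subgroup.zpowers (pyrGammaMul n))) := by
  obtain ⟨m, rfl⟩ : ∃ m, n = m + 1 := ⟨n - 1, by omega⟩
  set t : ZMod (2 ^ (m + 1)) := 2 ^ m
  have ht : t ≠ 0 := ZMod.two_pow_ne_zero m
  have hnegt : -t = t :=
    neg_eq_of_add_eq_zero_right (ZMod.add_self_eq_zero_iff_two_pow.2 (Or.inr rfl))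
  let γ : Subgroup.zpowers (pyrGammaMul (m + 1)) := ⟨_, Subgroup.mem_zpowers _⟩
  refine SemidirectProduct.isThreePyramidal_of_coprime (coprime_two_card_zpowers_pyrGammaMul _)
    (a := .ofAdd (t, 0)) (b := .ofAdd (0, t)) (c := .ofAdd (t, t)) ?_
    (by simp [ht]) (by simp [ht.symm]) (by simp [ht.symm])
    ⟨γ, by simp [γ, pyrGammaMul_apply_ofAdd, hnegt]⟩
    ⟨γ, by simp [γ, pyrGammaMul_apply_ofAdd, hnegt]⟩
  rw [Multiplicative.setOf_orderOf_eq,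
    setOf_addOrderOf_prod_eq_two ht fun _ => ZMod.add_self_eq_zero_iff_two_pow]
  simp only [Set.image_insert_eq, Set.image_singleton]
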